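/- For all integers m ≥ 0 and k ≥ 1, we have B_m^{(k)}(−x) = Σ_{n=0}^m (−1)^{m−n} D̂_n^(k)(x) S_2(m,n) as an identity of polynomials in x over ℚ, where D̂_n^(k)(x) are the Daehee polynomials of the second kind of order k, B_m^{(k)}(x) are the Bernoulli polynomials of order k, and S_2 denotes the Stirling numbers of the second kind. -/

import Mathlib

open PowerSeries Polynomial Finset

/-- `log(1+t) = Σ_{n≥1} (-1)^{n+1} t^n / n` as a formal power series over ℚ. -/
noncomputable def logOneAdd : PowerSeries ℚ :=
  PowerSeries.mk fun n => if n = 0 then 0 else (-1) ^ (n + 1) / (n : ℚ)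

/-- `−log(1−t) = Σ_{n≥1} t^n / n` as a formal power series over ℚ. -/
noncomputable def negLogOneSub : PowerSeries ℚ :=
  PowerSeries.mk fun n => if n = 0 then 0 else 1 / (n : ℚ)

/-- `e^t = Σ_{n≥0} t^n / n!` as a formal power series over ℚ. -/
noncomputable def expQ : PowerSeries ℚ :=
  PowerSeries.mk fun n => 1 / (n.factorial : ℚ)

/-- `log(1+t)` as a formal power series with coefficients in ℚ[x]. -/
noncomputable def logOneAddP : PowerSeries (Polynomial ℚ) :=
  PowerSeries.mk fun n => Polynomial.C (if n = 0 then 0 else (-1) ^ (n + 1) / (n : ℚ))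

/-- `−log(1−t)` as a formal power series with coefficients in ℚ[x]. -/
noncomputable def negLogOneSubP : PowerSeries (Polynomial ℚ) :=
  PowerSeries.mk fun n => Polynomial.C (if n = 0 then 0 else 1 / (n : ℚ))

/-- `e^t` as a formal power series with coefficients in ℚ[x]. -/
noncomputable def expP : PowerSeries (Polynomial ℚ) :=
  PowerSeries.mk fun n => Polynomial.C (1 / (n.factorial : ℚ))

/-- `e^{xt} = Σ_{n≥0} x^n t^n / n!` as a formal power series with coefficients in ℚ[x]. -/
noncomputable def expXT : PowerSeries (Polynomial ℚ) :=
  PowerSeries.mk fun n => Polynomial.C (1 / (n.factorial : ℚ)) * Polynomial.X ^ n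

/-- The binomial polynomial `x(x−1)⋯(x−n+1)/n! ∈ ℚ[x]`. -/
noncomputable def binomPoly (n : ℕ) : Polynomial ℚ :=
  Polynomial.C (1 / (n.factorial : ℚ)) *
    ∏ i ∈ Finset.range n, (Polynomial.X - Polynomial.C (i : ℚ))

/-- `(1+t)^x = Σ_{n≥0} C(x,n) t^n` as a formal power series with coefficients in ℚ[x]. -/
noncomputable def onePlusTX : PowerSeries (Polynomial ℚ) :=
  PowerSeries.mk binomPoly

/-- `(1−t)^x = Σ_{n≥0} (−1)^n C(x,n) t^n` as a formal power series with coefficients in ℚ[x]. -/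
noncomputable def oneSubTX : PowerSeries (Polynomial ℚ) :=
  PowerSeries.mk fun n => (-1) ^ n * binomPoly n

/-!
Substituting `t ↦ s := 1 - e^{-t}` into the generating function of `D̂_n^(k)(x)` turns
`(1 - t) (-log (1 - t))` into `e^{-t} t` and `(1 - t)^x` into `e^{-xt}`. Since
`e^{-t} (e^t - 1) = s`, comparing with the generating function of `B_n^(k)(-x)` and cancelling
`s^k` gives `Σ_n D̂_n^(k)(x) s^n / n! = Σ_m B_m^(k)(-x) t^m / m!`, and the coefficient of `t^m`
in `s^n = (-1)^n (e^{-t} - 1)^n` is `(-1)^(m-n) n! S_2(m,n) / m!`. The two substitution identities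
are proved by differentiating: by the chain rule and `s' = 1 - s`, both sides satisfy the same
first-order differential equation and have the same constant term.
-/

namespace PowerSeries

section CommRing

variable {A : Type*} [CommRing A]

theorem coeff_pow_eq_zero_of_lt {s : A⟦X⟧} (hs : constantCoeff s = 0) {m j : ℕ} (h : m < j) :
    coeff m (s ^ j) = 0 :=
  coeff_of_lt_order _
    ((Nat.cast_lt.mpr h).trans_le (le_order_pow_of_constantCoeff_eq_zero j hs))

theorem coeff_subst_eq_sum_range {s : A⟦X⟧} (hs : constantCoeff s = 0) (f : A⟦X⟧) (m : ℕ) :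
    coeff m (f.subst s) = ∑ j ∈ range (m + 1), coeff j f * coeff m (s ^ j) := by
  rw [coeff_subst' (HasSubst.of_constantCoeff_zero' hs)]
  refine finsum_eq_sum_of_support_subset _ fun j hj => ?_
  by_contra hjm
  simp only [coe_range, Set.mem_Iio, not_lt] at hjm
  exact hj (by simp only [coeff_pow_eq_zero_of_lt hs (by omega : m < j), smul_zero])

variable [Algebra ℚ A]

theorem derivative_rescale_exp (a : A) :
    d⁄dX A (rescale a (exp A)) = C a * rescale a (exp A) := by
  rw [rescale_eq_subst, derivative_subst (HasSubst.smul_X' a), derivative_exp, Derivation.map_smul,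
    derivative_X, mul_comm, smul_eq_C_mul, mul_one]

theorem constantCoeff_rescale_exp (a : A) : constantCoeff (rescale a (exp A)) = 1 := by
  rw [← coeff_zero_eq_constantCoeff_apply, coeff_rescale, coeff_exp]
  simp

theorem rescale_neg_mul_rescale_exp (a : A) :
    rescale (-a) (exp A) * rescale a (exp A) = 1 := by
  rw [exp_mul_exp_eq_exp_add, neg_add_cancel]
  ext n
  simp [coeff_one]

theorem eq_rescale_exp_of_derivative_eq [IsAddTorsionFree A] {f : A⟦X⟧} {a : A}
    (hf : d⁄dX A f = C a * f) (hf0 : constantCoeff f = 1) : f = rescale a (exp A) := by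
  have hone : f * rescale (-a) (exp A) = 1 := by
    refine derivative.ext ?_ ?_
    · rw [Derivation.leibniz, derivative_rescale_exp, hf, derivative_one, smul_eq_mul,
        smul_eq_mul, map_neg]
      ring
    · simp [hf0, constantCoeff_rescale_exp]
  calc f = f * (rescale (-a) (exp A) * rescale a (exp A)) := by
        rw [rescale_neg_mul_rescale_exp, mul_one]
    _ = rescale a (exp A) := by rw [← mul_assoc, hone, one_mul]

variable (A) in
noncomputable def oneSubExpNeg : A⟦X⟧ := 1 - rescale (-1) (exp A)

theorem constantCoeff_oneSubExpNeg : constantCoeff (oneSubExpNeg A) = 0 := by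
  rw [oneSubExpNeg, map_sub, map_one, constantCoeff_rescale_exp, sub_self]

theorem derivative_oneSubExpNeg : d⁄dX A (oneSubExpNeg A) = 1 - oneSubExpNeg A := by
  rw [oneSubExpNeg, map_sub, derivative_one, derivative_rescale_exp, sub_sub_cancel, map_neg,
    map_one]
  ring

theorem oneSubExpNeg_eq_mul : oneSubExpNeg A = rescale (-1) (exp A) * (exp A - 1) := by
  have h : rescale (-1) (exp A) * exp A = 1 := by simpa using rescale_neg_mul_rescale_exp (1 : A)
  rw [oneSubExpNeg, mul_sub, mul_one, h]

theorem oneSubExpNeg_ne_zero [Nontrivial A] : oneSubExpNeg A ≠ 0 := by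
  intro h
  have h1 := congrArg (coeff 1) h
  simp [oneSubExpNeg, coeff_rescale, coeff_one] at h1

theorem coeff_oneSubExpNeg_pow (m n : ℕ) :
    coeff m (oneSubExpNeg A ^ n)
      = algebraMap ℚ A ((-1) ^ (m + n) * coeff m ((exp ℚ - 1) ^ n)) := by
  have : oneSubExpNeg A = -rescale (-1) (map (algebraMap ℚ A) (exp ℚ - 1)) := by
    rw [oneSubExpNeg, map_sub, map_exp, map_one, map_sub, map_one, neg_sub]
  rw [this, neg_pow, ← map_pow, ← map_pow, show (-1 : A⟦X⟧) ^ n = C ((-1) ^ n) by simp,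
    coeff_C_mul, coeff_rescale, coeff_map, map_mul, map_pow (algebraMap ℚ A), map_neg, map_one,
    pow_add]
  ring

theorem hasSubst_oneSubExpNeg : HasSubst (oneSubExpNeg A) :=
  HasSubst.of_constantCoeff_zero' constantCoeff_oneSubExpNeg

theorem derivative_subst_oneSubExpNeg (f : A⟦X⟧) :
    d⁄dX A (f.subst (oneSubExpNeg A)) = ((1 - X) * d⁄dX A f).subst (oneSubExpNeg A) := by
  rw [derivative_subst hasSubst_oneSubExpNeg, derivative_oneSubExpNeg,
    ← coe_substAlgHom hasSubst_oneSubExpNeg, map_mul, map_sub, map_one, substAlgHom_X, mul_comm]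

end CommRing

end PowerSeries

open PowerSeries

theorem expQ_eq_exp : expQ = exp ℚ := by
  ext n
  simp [expQ, coeff_exp]

theorem expP_eq_exp : expP = exp ℚ[X] := by
  ext n
  simp [expP, coeff_exp]

theorem expXT_eq_rescale_exp : expXT = rescale Polynomial.X (exp ℚ[X]) := by
  ext n : 1
  rw [expXT, coeff_mk, coeff_rescale, coeff_exp, Polynomial.algebraMap_eq, mul_comm]

theorem derivative_negLogOneSubP : d⁄dX ℚ[X] negLogOneSubP = PowerSeries.mk 1 := by
  ext n : 1
  rw [PowerSeries.coeff_derivative, negLogOneSubP, coeff_mk, coeff_mk, if_neg n.succ_ne_zero,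
    Pi.one_apply, ← Polynomial.C_eq_natCast, ← map_one Polynomial.C, ← map_add, ← map_mul]
  congr 1
  push_cast
  field_simp

theorem subst_oneSubExpNeg_negLogOneSubP :
    negLogOneSubP.subst (oneSubExpNeg ℚ[X]) = PowerSeries.X := by
  refine derivative.ext ?_ ?_
  · rw [derivative_subst_oneSubExpNeg, derivative_negLogOneSubP, mul_comm,
      mk_one_mul_one_sub_eq_one, PowerSeries.derivative_X,
      ← coe_substAlgHom hasSubst_oneSubExpNeg, map_one]
  · rw [constantCoeff_X]
    exact constantCoeff_subst_eq_zero constantCoeff_oneSubExpNeg _ (by simp [negLogOneSubP])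

theorem binomPoly_succ_mul (n : ℕ) :
    binomPoly (n + 1) * ((n : ℚ[X]) + 1) = binomPoly n * (Polynomial.X - (n : ℚ[X])) := by
  have hfac : Polynomial.C (1 / ((n + 1).factorial : ℚ)) * ((n : ℚ[X]) + 1)
      = Polynomial.C (1 / (n.factorial : ℚ)) := by
    rw [← Polynomial.C_eq_natCast, ← map_one Polynomial.C, ← map_add, ← map_mul]
    congr 1
    push_cast [Nat.factorial_succ]
    field_simp
  rw [binomPoly, binomPoly, prod_range_succ, Polynomial.C_eq_natCast]
  linear_combination (∏ i ∈ range n, (Polynomial.X - Polynomial.C (i : ℚ)))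
    * (Polynomial.X - (n : ℚ[X])) * hfac

theorem one_sub_X_mul_derivative_oneSubTX :
    (1 - PowerSeries.X) * d⁄dX ℚ[X] oneSubTX = PowerSeries.C (-Polynomial.X) * oneSubTX := by
  ext n : 1
  rw [sub_mul, one_mul, map_sub, PowerSeries.coeff_C_mul, PowerSeries.coeff_derivative,
    oneSubTX, coeff_mk, coeff_mk]
  rcases n with _ | n
  · simp [binomPoly]
  · rw [coeff_succ_X_mul, PowerSeries.coeff_derivative, coeff_mk]
    have h := binomPoly_succ_mul (n + 1)
    push_cast at h ⊢
    linear_combination (-1) ^ n * h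

theorem subst_oneSubExpNeg_oneSubTX :
    oneSubTX.subst (oneSubExpNeg ℚ[X]) = rescale (-Polynomial.X) (exp ℚ[X]) := by
  refine eq_rescale_exp_of_derivative_eq ?_ ?_
  · rw [derivative_subst_oneSubExpNeg, one_sub_X_mul_derivative_oneSubTX,
      subst_mul hasSubst_oneSubExpNeg, subst_C]
    rfl
  · rw [← coeff_zero_eq_constantCoeff_apply, coeff_subst_eq_sum_range constantCoeff_oneSubExpNeg]
    simp [oneSubTX, binomPoly]

theorem subst_oneSubExpNeg_negLog_pow_mul_oneSubTX (k : ℕ) :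
    (((1 - PowerSeries.X) * negLogOneSubP) ^ k * oneSubTX).subst (oneSubExpNeg ℚ[X])
      = (rescale (-1) (exp ℚ[X]) * PowerSeries.X) ^ k * rescale (-Polynomial.X) (exp ℚ[X]) := by
  rw [← coe_substAlgHom hasSubst_oneSubExpNeg, map_mul, map_pow, map_mul, map_sub, map_one,
    substAlgHom_X, coe_substAlgHom, subst_oneSubExpNeg_negLogOneSubP, subst_oneSubExpNeg_oneSubTX,
    oneSubExpNeg, sub_sub_cancel]

theorem map_compRingHom_neg_X_expXT :
    map (Polynomial.compRingHom (-Polynomial.X)) expXT = rescale (-Polynomial.X) (exp ℚ[X]) := by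
  rw [expXT_eq_rescale_exp, ← rescale_map, map_exp, Polynomial.coe_compRingHom_apply,
    Polynomial.X_comp]

theorem subst_oneSubExpNeg_eq_map_comp_neg_X {k : ℕ} {D B : ℚ[X]⟦X⟧}
    (hD : ((1 - PowerSeries.X) * negLogOneSubP) ^ k * oneSubTX = PowerSeries.X ^ k * D)
    (hB : PowerSeries.X ^ k * expXT = (expP - 1) ^ k * B) :
    D.subst (oneSubExpNeg ℚ[X]) = PowerSeries.map (Polynomial.compRingHom (-Polynomial.X)) B := by
  have hD' : oneSubExpNeg ℚ[X] ^ k * D.subst (oneSubExpNeg ℚ[X])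
      = (rescale (-1) (exp ℚ[X]) * PowerSeries.X) ^ k * rescale (-Polynomial.X) (exp ℚ[X]) := by
    rw [← subst_oneSubExpNeg_negLog_pow_mul_oneSubTX, hD, subst_mul hasSubst_oneSubExpNeg,
      subst_pow hasSubst_oneSubExpNeg, subst_X hasSubst_oneSubExpNeg]
  have hB' : PowerSeries.X ^ k * rescale (-Polynomial.X) (exp ℚ[X])
      = (exp ℚ[X] - 1) ^ k * PowerSeries.map (Polynomial.compRingHom (-Polynomial.X)) B := by
    simpa [← map_compRingHom_neg_X_expXT, expP_eq_exp, map_exp] using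
      congrArg (PowerSeries.map (Polynomial.compRingHom (-Polynomial.X))) hB
  refine mul_left_cancel₀ (pow_ne_zero k oneSubExpNeg_ne_zero) ?_
  rw [hD', mul_pow, mul_assoc, hB', ← mul_assoc, ← mul_pow, ← oneSubExpNeg_eq_mul]

theorem coeff_oneSubExpNeg_pow_of_stirling {S2 : ℕ → ℕ → ℚ}
    (hS2 : ∀ j : ℕ, (expQ - 1) ^ j
      = PowerSeries.mk (fun l =>
          if j ≤ l then (j.factorial : ℚ) * S2 l j / (l.factorial : ℚ) else 0))
    {m n : ℕ} (hnm : n ≤ m) :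
    PowerSeries.coeff m (oneSubExpNeg ℚ[X] ^ n)
      = Polynomial.C ((-1) ^ (m - n) * S2 m n * n.factorial / m.factorial) := by
  obtain ⟨d, rfl⟩ := Nat.exists_eq_add_of_le hnm
  rw [coeff_oneSubExpNeg_pow, ← expQ_eq_exp, hS2, coeff_mk, if_pos hnm, Polynomial.algebraMap_eq,
    Nat.add_sub_cancel_left, show n + d + n = d + 2 * n by ring, pow_add, pow_mul, neg_one_sq,
    one_pow, mul_one]
  ring_nf

theorem bernoulli_poly_neg_eq_signed_daehee_second_kind_poly_stirling2_sum_general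
    (k : ℕ) (m : ℕ)
    (Dh : ℕ → Polynomial ℚ)
    (hDh : ((1 - PowerSeries.X) * negLogOneSubP) ^ k * oneSubTX
      = PowerSeries.X ^ k
          * PowerSeries.mk (fun j => Polynomial.C ((j.factorial : ℚ)⁻¹) * Dh j))
    (B : ℕ → Polynomial ℚ)
    (hB : (PowerSeries.X : PowerSeries (Polynomial ℚ)) ^ k * expXT
      = (expP - 1) ^ k
          * PowerSeries.mk (fun j => Polynomial.C ((j.factorial : ℚ)⁻¹) * B j))
    (S2 : ℕ → ℕ → ℚ)
    (hS2 : ∀ j : ℕ, (expQ - 1) ^ j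
      = PowerSeries.mk (fun l =>
          if j ≤ l then (j.factorial : ℚ) * S2 l j / (l.factorial : ℚ) else 0)) :
    (B m).comp (-Polynomial.X)
      = ∑ n ∈ Finset.range (m + 1),
          Polynomial.C ((-1 : ℚ) ^ (m - n) * S2 m n) * Dh n := by
  have hm := congrArg (PowerSeries.coeff m) (subst_oneSubExpNeg_eq_map_comp_neg_X hDh hB)
  rw [coeff_subst_eq_sum_range constantCoeff_oneSubExpNeg, PowerSeries.coeff_map, coeff_mk,
    Polynomial.coe_compRingHom_apply, Polynomial.mul_comp, Polynomial.C_comp] at hm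
  have hfac : Polynomial.C ((m.factorial : ℚ)⁻¹) ≠ 0 := by simp [Nat.factorial_ne_zero]
  refine mul_left_cancel₀ hfac ?_
  rw [← hm, mul_sum]
  refine sum_congr rfl fun n hn => ?_
  rw [coeff_mk, coeff_oneSubExpNeg_pow_of_stirling hS2 (mem_range_succ_iff.mp hn),
    mul_right_comm, ← mul_assoc, ← map_mul, ← map_mul]
  congr 2
  field_simp

/-- For `m ≥ 0`, `k ≥ 1`, we have
`B_m^{(k)}(−x) = Σ_{n=0}^m (−1)^{m−n} D̂_n^(k)(x) S_2(m,n)` in `ℚ[x]`, where `D̂_n^(k)(x)`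
are the Daehee polynomials of the second kind of order `k`, `B_m^{(k)}(x)` the Bernoulli
polynomials of order `k`, and `S_2` the Stirling numbers of the second kind. -/
theorem bernoulli_poly_neg_eq_signed_daehee_second_kind_poly_stirling2_sum
    (k : ℕ) (hk : 1 ≤ k) (m : ℕ)
    (Dh : ℕ → Polynomial ℚ)
    (hDh : ((1 - PowerSeries.X) * negLogOneSubP) ^ k * oneSubTX
      = PowerSeries.X ^ k
          * PowerSeries.mk (fun j => Polynomial.C ((j.factorial : ℚ)⁻¹) * Dh j))
    (B : ℕ → Polynomial ℚ)
    (hB : (PowerSeries.X : PowerSeries (Polynomial ℚ)) ^ k * expXT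
      = (expP - 1) ^ k
          * PowerSeries.mk (fun j => Polynomial.C ((j.factorial : ℚ)⁻¹) * B j))
    (S2 : ℕ → ℕ → ℚ)
    (hS2 : ∀ j : ℕ, (expQ - 1) ^ j
      = PowerSeries.mk (fun l =>
          if j ≤ l then (j.factorial : ℚ) * S2 l j / (l.factorial : ℚ) else 0)) :
    (B m).comp (-Polynomial.X)
      = ∑ n ∈ Finset.range (m + 1),
          Polynomial.C ((-1 : ℚ) ^ (m - n) * S2 m n) * Dh n :=
  bernoulli_poly_neg_eq_signed_daehee_second_kind_poly_stirling2_sum_general k m Dh hDh B hB S2 hS2
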